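/- arXiv:2302.02263 — 6 statements merged into one kernel-verified Lean document; each statement's English description precedes it below -/
import Mathlib

section
/- Let μ, γ₂, θ_{v2}, β₂, α_{v2} > 0, 0 < v ≤ 1, and define R₂ = (β₂/(γ₂+μ))·[1 + v(α_{v2}θ_{v2}/(θ_{v2}+μ) − 1)]. Consider the quadratic a x² + b x + c with a = α_{v2}, b = μα_{v2}[1 − β₂(1−v)/(γ₂+μ)] + μ[1 − β₂α_{v2}θ_{v2}v/((γ₂+μ)(θ_{v2}+μ))], c = μ²(1 − R₂). If R₂ ≤ 1 then b > 0 and c ≥ 0, and in particular the quadratic has no positive real root. -/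
theorem quadratic_no_positive_root_of_R2_le_one
    (μ γ2 θv2 β2 αv2 v : ℝ)
    (hμ : 0 < μ) (hγ2 : 0 < γ2) (hθ : 0 < θv2) (hβ2 : 0 < β2) (hα : 0 < αv2)
    (hv : 0 < v) (hv1 : v ≤ 1)
    (R2 : ℝ) (hR2def : R2 = β2 / (γ2 + μ) * (1 + v * (αv2 * θv2 / (θv2 + μ) - 1)))
    (a b c : ℝ)
    (ha : a = αv2)
    (hb : b = μ * αv2 * (1 - β2 * (1 - v) / (γ2 + μ))
            + μ * (1 - β2 * αv2 * θv2 * v / ((γ2 + μ) * (θv2 + μ))))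
    (hc : c = μ ^ 2 * (1 - R2))
    (hR2 : R2 ≤ 1) :
    0 < b ∧ 0 ≤ c ∧ ∀ x : ℝ, 0 < x → a * x ^ 2 + b * x + c ≠ 0 := by
  have hD : (0:ℝ) < γ2 + μ := by linarith
  have hE : (0:ℝ) < θv2 + μ := by linarith
  -- key polynomial inequality from R2 ≤ 1
  have h1 : β2 * ((1 - v) * (θv2 + μ) + αv2 * θv2 * v) ≤ (γ2 + μ) * (θv2 + μ) := by
    rw [hR2def] at hR2
    rw [div_mul_eq_mul_div, div_le_one hD] at hR2
    have h2 := mul_le_mul_of_nonneg_right hR2 hE.le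
    have h3 : v * (αv2 * θv2 / (θv2 + μ) - 1) * (θv2 + μ)
        = v * (αv2 * θv2 - (θv2 + μ)) := by
      field_simp
    nlinarith [h2, h3]
  have hS : 0 ≤ β2 * (1 - v) * (θv2 + μ) := by
    have : 0 ≤ 1 - v := by linarith
    positivity
  have hT : 0 ≤ β2 * αv2 * θv2 * v := by positivity
  have hDE : 0 < (γ2 + μ) * (θv2 + μ) := mul_pos hD hE
  have hbpos : 0 < b := by
    rw [hb]
    have e1 : μ * αv2 * (1 - β2 * (1 - v) / (γ2 + μ))
            + μ * (1 - β2 * αv2 * θv2 * v / ((γ2 + μ) * (θv2 + μ)))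
        = μ * (αv2 * ((γ2 + μ) * (θv2 + μ) - β2 * (1 - v) * (θv2 + μ))
              + ((γ2 + μ) * (θv2 + μ) - β2 * αv2 * θv2 * v)) / ((γ2 + μ) * (θv2 + μ)) := by
      field_simp
    rw [e1]
    apply div_pos _ hDE
    apply mul_pos hμ
    rcases le_total αv2 1 with h | h
    · nlinarith
    · nlinarith
  refine ⟨hbpos, ?_, ?_⟩
  · rw [hc]; nlinarith
  · intro x hx
    have hcnn : 0 ≤ c := by rw [hc]; nlinarith
    have : 0 < a * x ^ 2 + b * x + c := by
      have := mul_pos hbpos hx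
      nlinarith [mul_pos hα (mul_pos hx hx), ha]
    linarith [this]
end

section
/- Let μ, γ₁, γ₂, θ₁, θ₂, θ_{v2}, β₁, β₂, α_{v2} > 0, 0 ≤ v < 1, α₂ ≤ 1. Define R₁ = β₁(1−v)/(γ₁+μ), assume R₁ > 1, and let S*/N = (γ₁+μ)/β₁, R₁*/N = (θ₂γ₁(1−v)/((θ₂+μ)(γ₁+μ)))(1 − 1/R₁), R_{v1}*/N = θ_{v2}v/(θ_{v2}+μ) be the equilibrium fractions at the strain-1-only endemic equilibrium. Then the invasion reproduction number R₁² = (β₂/(γ₂+μ))·(S* + α₂R₁* + α_{v2}R_{v1}*)/N satisfies R₁² ≤ R₂, where R₂ = (β₂/(γ₂+μ))[1 − v + vα_{v2}θ_{v2}/(θ_{v2}+μ)]. -/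
theorem invasion_number_le_R2
    (μ γ1 γ2 θ1 θ2 θv2 β1 β2 αv2 α2 v : ℝ)
    (hμ : 0 < μ) (hγ1 : 0 < γ1) (hγ2 : 0 < γ2) (hθ1 : 0 < θ1) (hθ2 : 0 < θ2)
    (hθv2 : 0 < θv2) (hβ1 : 0 < β1) (hβ2 : 0 < β2) (hαv2 : 0 < αv2)
    (hv0 : 0 ≤ v) (hv1 : v < 1) (hα2 : α2 ≤ 1)
    (R1 : ℝ) (hR1def : R1 = β1 * (1 - v) / (γ1 + μ)) (hR1 : 1 < R1)
    (Sfrac R1frac Rv1frac : ℝ)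
    (hS : Sfrac = (γ1 + μ) / β1)
    (hR1frac : R1frac = θ2 * γ1 * (1 - v) / ((θ2 + μ) * (γ1 + μ)) * (1 - 1 / R1))
    (hRv1 : Rv1frac = θv2 * v / (θv2 + μ)) :
    β2 / (γ2 + μ) * (Sfrac + α2 * R1frac + αv2 * Rv1frac) ≤
      β2 / (γ2 + μ) * (1 - v + v * αv2 * θv2 / (θv2 + μ)) := by
  have hR1pos : (0:ℝ) < R1 := lt_trans one_pos hR1
  have hγμ : (0:ℝ) < γ1 + μ := by linarith
  have hθμ : (0:ℝ) < θ2 + μ := by linarith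
  have hθvμ : (0:ℝ) < θv2 + μ := by linarith
  have h1v : (0:ℝ) < 1 - v := by linarith
  -- Sfrac = (1-v)/R1
  have hSf : Sfrac = (1 - v) / R1 := by
    rw [hS, hR1def]
    field_simp
  -- αv2 * Rv1frac = v * αv2 * θv2 / (θv2 + μ)
  have hRvEq : αv2 * Rv1frac = v * αv2 * θv2 / (θv2 + μ) := by
    rw [hRv1]; field_simp
  have hkey : Sfrac + α2 * R1frac ≤ 1 - v := by
    have hc : θ2 * γ1 * (1 - v) / ((θ2 + μ) * (γ1 + μ)) ≤ 1 - v := by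
      rw [div_le_iff₀ (by positivity)]
      nlinarith [mul_pos hθ2 hγ1, mul_pos hμ hγ1, mul_pos hθ2 hμ, mul_pos hμ hμ]
    have hfac : (0:ℝ) ≤ 1 - 1 / R1 := by
      have : 1 / R1 ≤ 1 := by
        rw [div_le_one hR1pos]; linarith
      linarith
    have hR1fnn : 0 ≤ R1frac := by
      rw [hR1frac]; positivity
    have hR1fle : R1frac ≤ (1 - v) * (1 - 1 / R1) := by
      rw [hR1frac]
      exact mul_le_mul_of_nonneg_right hc hfac
    have hα : α2 * R1frac ≤ R1frac := by nlinarith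
    have : Sfrac + R1frac ≤ 1 - v := by
      rw [hSf]
      have : (1 - v) / R1 + (1 - v) * (1 - 1 / R1) = 1 - v := by
        field_simp
        ring
      linarith
    linarith
  have hcoef : (0:ℝ) ≤ β2 / (γ2 + μ) := by positivity
  apply mul_le_mul_of_nonneg_left _ hcoef
  rw [hRvEq]
  linarith
end

section
/- Let β₁, β₂, γ₁, γ₂, μ, θ_{v2}, α_{v2} > 0, K = α_{v2}θ_{v2}/(θ_{v2}+μ), R₁^{wv} = β₁/(γ₁+μ) > 1, R₂^{wv} = β₂/(γ₂+μ) < 1, and suppose K > 1/R₂^{wv}. Set v₁* = 1 − 1/R₁^{wv} and v₂* = (1/R₂^{wv} − 1)/(K−1). Then there exists v ∈ (0,1) with both R₁ = R₁^{wv}(1−v) < 1 and R₂ = R₂^{wv}[1+v(K−1)] < 1 if and only if v₁* < v₂*, which is equivalent to α_{v2} < (1 + μ/θ_{v2})·(1 + (1/R₂^{wv} − 1)/(1 − 1/R₁^{wv})). -/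
/-!
Each reproduction number is an affine function of the vaccination rate `v`: `R₁ < 1` exactly
when `v > v₁*`, and, since `K > 1`, `R₂ < 1` exactly when `v < v₂*`. The assumptions
`R₁^{wv} > 1` and `K > 1/R₂^{wv}` put both thresholds in `(0, 1)`, so a suitable `v ∈ (0, 1)`
exists iff `v₁* < v₂*`. Writing `αᵥ₂ = K (1 + μ/θᵥ₂)`, that inequality is a rearrangement of the
bound on `αᵥ₂`.
-/

section

variable {𝕜 : Type*} [Field 𝕜] [LinearOrder 𝕜] [IsStrictOrderedRing 𝕜]

lemma mul_one_sub_lt_one_iff {a v : 𝕜} (ha : 0 < a) : a * (1 - v) < 1 ↔ 1 - 1 / a < v := by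
  rw [← lt_div_iff₀' ha, sub_lt_comm]

lemma mul_one_add_mul_lt_one_iff {b c v : 𝕜} (hb : 0 < b) (hc : 0 < c) :
    b * (1 + v * c) < 1 ↔ v < (1 / b - 1) / c := by
  rw [← lt_div_iff₀' hb, ← lt_sub_iff_add_lt', lt_div_iff₀ hc]

lemma exists_pos_lt_one_between_iff {p q : 𝕜} (hp : 0 ≤ p) (hq : q ≤ 1) :
    (∃ v : 𝕜, 0 < v ∧ v < 1 ∧ p < v ∧ v < q) ↔ p < q := by
  refine ⟨fun ⟨v, _, _, hpv, hvq⟩ => hpv.trans hvq, fun hpq => ?_⟩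
  obtain ⟨v, hpv, hvq⟩ := exists_between hpq
  exact ⟨v, hp.trans_lt hpv, hvq.trans_le hq, hpv, hvq⟩

end

theorem vaccination_window_iff_general
    (β2 γ2 μ θv2 αv2 : ℝ)
    (hβ2 : 0 < β2) (hγ2 : 0 < γ2)
    (hμ : 0 < μ) (hθ : 0 < θv2)
    (K R1wv R2wv : ℝ)
    (hK : K = αv2 * θv2 / (θv2 + μ))
    (hR1wv1 : 1 < R1wv)
    (hR2wv : R2wv = β2 / (γ2 + μ)) (hR2wv1 : R2wv < 1)
    (hKbig : 1 / R2wv < K)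
    (v1s v2s : ℝ)
    (hv1s : v1s = 1 - 1 / R1wv) (hv2s : v2s = (1 / R2wv - 1) / (K - 1)) :
    ((∃ v : ℝ, 0 < v ∧ v < 1 ∧ R1wv * (1 - v) < 1 ∧ R2wv * (1 + v * (K - 1)) < 1) ↔
      v1s < v2s) ∧
    (v1s < v2s ↔ αv2 < (1 + μ / θv2) * (1 + (1 / R2wv - 1) / (1 - 1 / R1wv))) := by
  have hR1 : 0 < R1wv := one_pos.trans hR1wv1
  have hR2 : 0 < R2wv := hR2wv ▸ by positivity
  have hK1 : 0 < K - 1 := by linarith [one_lt_one_div hR2 hR2wv1]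
  have hv1 : 0 < v1s := by rw [hv1s, sub_pos, div_lt_one hR1]; exact hR1wv1
  have hv2 : v2s ≤ 1 := by rw [hv2s, div_le_one hK1]; linarith
  constructor
  · simp only [mul_one_sub_lt_one_iff hR1, mul_one_add_mul_lt_one_iff hR2 hK1, ← hv1s, ← hv2s]
    exact exists_pos_lt_one_between_iff hv1.le hv2
  · have hα : αv2 = K * (1 + μ / θv2) := by
      rw [hK]; field_simp
    rw [hv2s, lt_div_comm₀ hv1 hK1, hα, ← hv1s, mul_comm K, mul_lt_mul_iff_right₀ (by positivity),
      sub_lt_iff_lt_add']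

theorem vaccination_window_iff
    (β1 β2 γ1 γ2 μ θv2 αv2 : ℝ)
    (hβ1 : 0 < β1) (hβ2 : 0 < β2) (hγ1 : 0 < γ1) (hγ2 : 0 < γ2)
    (hμ : 0 < μ) (hθ : 0 < θv2) (hαv2 : 0 < αv2)
    (K R1wv R2wv : ℝ)
    (hK : K = αv2 * θv2 / (θv2 + μ))
    (hR1wv : R1wv = β1 / (γ1 + μ)) (hR1wv1 : 1 < R1wv)
    (hR2wv : R2wv = β2 / (γ2 + μ)) (hR2wv1 : R2wv < 1)
    (hKbig : 1 / R2wv < K)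
    (v1s v2s : ℝ)
    (hv1s : v1s = 1 - 1 / R1wv) (hv2s : v2s = (1 / R2wv - 1) / (K - 1)) :
    ((∃ v : ℝ, 0 < v ∧ v < 1 ∧ R1wv * (1 - v) < 1 ∧ R2wv * (1 + v * (K - 1)) < 1) ↔
      v1s < v2s) ∧
    (v1s < v2s ↔ αv2 < (1 + μ / θv2) * (1 + (1 / R2wv - 1) / (1 - 1 / R1wv))) :=
  vaccination_window_iff_general β2 γ2 μ θv2 αv2 hβ2 hγ2 hμ hθ K R1wv R2wv hK hR1wv1 hR2wv hR2wv1
    hKbig v1s v2s hv1s hv2s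
end

section
/- Let β₁, β₂, γ₁, γ₂, μ, θ_{v2}, α_{v2} > 0, K = α_{v2}θ_{v2}/(θ_{v2}+μ), R₁^{wv} = β₁/(γ₁+μ) > 1, R₂^{wv} = β₂/(γ₂+μ) ≥ 1. If K ≥ 1/R₂^{wv} (in particular if α_{v2} ≥ (1+μ/θ_{v2})/R₂^{wv}), then for every v ∈ [0,1], R₂ = R₂^{wv}[1+v(K−1)] ≥ 1; i.e., no vaccination rate can bring the strain-2 reproduction number below one. -/
theorem no_vaccination_rate_works
    (β1 β2 γ1 γ2 μ θv2 αv2 : ℝ)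
    (hβ1 : 0 < β1) (hβ2 : 0 < β2) (hγ1 : 0 < γ1) (hγ2 : 0 < γ2)
    (hμ : 0 < μ) (hθ : 0 < θv2) (hαv2 : 0 < αv2)
    (K R1wv R2wv : ℝ)
    (hK : K = αv2 * θv2 / (θv2 + μ))
    (hR1wv : R1wv = β1 / (γ1 + μ)) (hR1wv1 : 1 < R1wv)
    (hR2wv : R2wv = β2 / (γ2 + μ)) (hR2wv1 : 1 ≤ R2wv)
    (hKbig : 1 / R2wv ≤ K) :
    ∀ v : ℝ, 0 ≤ v → v ≤ 1 → 1 ≤ R2wv * (1 + v * (K - 1)) := by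
  intro v hv0 hv1
  have hR2 : 0 < R2wv := lt_of_lt_of_le one_pos hR2wv1
  have h1 : 1 ≤ R2wv * K := by
    have := (div_le_iff₀ hR2).mp hKbig
    linarith [this]
  nlinarith [mul_nonneg hv0 (sub_nonneg.mpr h1), mul_nonneg (sub_nonneg.mpr hv1) (sub_nonneg.mpr hR2wv1)]
end

section
/- Consider the 2-dimensional ODE system S' = (1−v)Λ − β₁I₁S/N − μS, I₁' = β₁I₁S/N − (γ₁+μ)I₁, with all parameters positive, v ∈ [0,1), N = Λ/μ, and R₁ = β₁(1−v)/(γ₁+μ) > 1. Let S* = (γ₁+μ)N/β₁ and I₁* = ((1−v)Λ/(γ₁+μ))(1 − 1/R₁) be the endemic equilibrium. Then along solutions with S > 0, I₁ > 0, the function L = ½[(S−S*)+(I₁−I₁*)]² + k(I₁ − I₁* − I₁* ln(I₁/I₁*)), with k = (2μ+γ₁)N/β₁, satisfies dL/dt = −μ(S−S*)² − (γ₁+μ)(I₁−I₁*)² ≤ 0, with equality iff S = S* and I₁ = I₁*. -/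
set_option maxHeartbeats 2000000 in
theorem lyapunov_derivative_endemic_E1
    (Λ μ β1 γ1 v : ℝ)
    (hΛ : 0 < Λ) (hμ : 0 < μ) (hβ1 : 0 < β1) (hγ1 : 0 < γ1)
    (hv0 : 0 ≤ v) (hv1 : v < 1)
    (N : ℝ) (hN : N = Λ / μ)
    (R1 : ℝ) (hR1def : R1 = β1 * (1 - v) / (γ1 + μ)) (hR1 : 1 < R1)
    (Sstar I1star k : ℝ)
    (hSstar : Sstar = (γ1 + μ) * N / β1)
    (hI1star : I1star = (1 - v) * Λ / (γ1 + μ) * (1 - 1 / R1))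
    (hk : k = (2 * μ + γ1) * N / β1)
    (S I1 : ℝ → ℝ) (t : ℝ)
    (hSpos : 0 < S t) (hI1pos : 0 < I1 t)
    (hS : HasDerivAt S ((1 - v) * Λ - β1 * I1 t * S t / N - μ * S t) t)
    (hI1 : HasDerivAt I1 (β1 * I1 t * S t / N - (γ1 + μ) * I1 t) t) :
    HasDerivAt
      (fun τ => (1 / 2) * ((S τ - Sstar) + (I1 τ - I1star)) ^ 2
        + k * (I1 τ - I1star - I1star * Real.log (I1 τ / I1star)))
      (-μ * (S t - Sstar) ^ 2 - (γ1 + μ) * (I1 t - I1star) ^ 2) t ∧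
    -μ * (S t - Sstar) ^ 2 - (γ1 + μ) * (I1 t - I1star) ^ 2 ≤ 0 ∧
    (-μ * (S t - Sstar) ^ 2 - (γ1 + μ) * (I1 t - I1star) ^ 2 = 0 ↔
      S t = Sstar ∧ I1 t = I1star) := by

  have hγμ : 0 < γ1 + μ := by linarith
  have hNpos : 0 < N := by rw [hN]; positivity
  have h1v : 0 < 1 - v := by linarith
  have hR1pos : 0 < R1 := by linarith
  have hI1starpos : 0 < I1star := by
    rw [hI1star]
    have : 0 < 1 - 1 / R1 := by
      have : 1 / R1 < 1 := by
        rw [div_lt_one hR1pos]; exact hR1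
      linarith
    positivity
  have hI1ne : I1 t ≠ 0 := ne_of_gt hI1pos
  have hI1sne : I1star ≠ 0 := ne_of_gt hI1starpos
  set S' : ℝ := (1 - v) * Λ - β1 * I1 t * S t / N - μ * S t with hS'
  set I1' : ℝ := β1 * I1 t * S t / N - (γ1 + μ) * I1 t with hI1'
  have hsum : HasDerivAt (fun τ => S τ - Sstar + (I1 τ - I1star)) (S' + I1') t :=
    (hS.sub_const _).add (hI1.sub_const _)
  have h1 : HasDerivAt (fun τ => (1 / 2 : ℝ) * (S τ - Sstar + (I1 τ - I1star)) ^ 2)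
      ((1 / 2 : ℝ) * ((2 : ℕ) * (S t - Sstar + (I1 t - I1star)) ^ 1 * (S' + I1'))) t :=
    (hsum.pow 2).const_mul _
  have hdiv : HasDerivAt (fun τ => I1 τ / I1star) (I1' / I1star) t := hI1.div_const _
  have hlog : HasDerivAt (fun τ => Real.log (I1 τ / I1star))
      ((I1' / I1star) / (I1 t / I1star)) t :=
    hdiv.log (by positivity)
  have h2 : HasDerivAt (fun τ => k * (I1 τ - I1star - I1star * Real.log (I1 τ / I1star)))
      (k * (I1' - I1star * ((I1' / I1star) / (I1 t / I1star)))) t :=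
    ((hI1.sub_const _).sub (hlog.const_mul I1star)).const_mul k
  have hderiv := h1.add h2
  have hNne : N ≠ 0 := ne_of_gt hNpos
  have hβne : β1 ≠ 0 := ne_of_gt hβ1
  have a2 : (1 - v) * Λ = μ * Sstar + (γ1 + μ) * I1star := by
    subst hN hR1def hSstar hI1star
    field_simp
    ring
  have heq : (1 / 2 : ℝ) * ((2 : ℕ) * (S t - Sstar + (I1 t - I1star)) ^ 1 * (S' + I1'))
      + k * (I1' - I1star * ((I1' / I1star) / (I1 t / I1star)))
      = -μ * (S t - Sstar) ^ 2 - (γ1 + μ) * (I1 t - I1star) ^ 2 := by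
    have hlogterm : I1star * ((I1' / I1star) / (I1 t / I1star)) = I1star * I1' / I1 t := by
      field_simp
    rw [hlogterm, hS', hI1', a2]
    subst hSstar hk
    field_simp
    ring
  rw [heq] at hderiv
  refine ⟨hderiv, ?_, ?_⟩
  · nlinarith [sq_nonneg (S t - Sstar), sq_nonneg (I1 t - I1star)]
  · constructor
    · intro h
      have hx : (S t - Sstar) ^ 2 = 0 := by
        nlinarith [sq_nonneg (S t - Sstar), sq_nonneg (I1 t - I1star)]
      have hy : (I1 t - I1star) ^ 2 = 0 := by
        nlinarith [sq_nonneg (S t - Sstar), sq_nonneg (I1 t - I1star)]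
      constructor
      · have := pow_eq_zero_iff two_ne_zero |>.mp hx
        linarith [sub_eq_zero.mp this]
      · have := pow_eq_zero_iff two_ne_zero |>.mp hy
        linarith [sub_eq_zero.mp this]
    · rintro ⟨h1, h2⟩
      rw [h1, h2]; ring
end

section
/- Let γ₁, μ, β₁, α₁ > 0 and N > 0, with R₁ = β₁S⁰/((γ₁+μ)N) where S⁰ = (1−v)N for v ∈ [0,1). Suppose R₀ ≤ 1 and α₁ ≤ 1/R₁. Then for any S, R₂ ≥ 0 with S + R₂ < S⁰: (i) if α₁ ≤ 1, then β₁S/((γ₁+μ)N) + α₁β₁R₂/((γ₁+μ)N) − 1 ≤ R₁(S+R₂)/S⁰ − 1 < 0; (ii) if α₁ > 1, then β₁S/((γ₁+μ)N) + α₁β₁R₂/((γ₁+μ)N) − 1 ≤ α₁R₁(S+R₂)/S⁰ − 1 < 0. -/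
theorem lyapunov_negativity_DFE
    (γ1 μ β1 α1 N v : ℝ)
    (hγ1 : 0 < γ1) (hμ : 0 < μ) (hβ1 : 0 < β1) (hα1 : 0 < α1) (hN : 0 < N)
    (hv0 : 0 ≤ v) (hv1 : v < 1)
    (S0 R1 : ℝ) (hS0 : S0 = (1 - v) * N)
    (hR1def : R1 = β1 * S0 / ((γ1 + μ) * N))
    (hR1le : R1 ≤ 1) (hα1R1 : α1 ≤ 1 / R1) :
    ∀ S R2 : ℝ, 0 ≤ S → 0 ≤ R2 → S + R2 < S0 →
      ((α1 ≤ 1 →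
        β1 * S / ((γ1 + μ) * N) + α1 * β1 * R2 / ((γ1 + μ) * N) - 1 ≤
          R1 * (S + R2) / S0 - 1 ∧ R1 * (S + R2) / S0 - 1 < 0) ∧
       (1 < α1 →
        β1 * S / ((γ1 + μ) * N) + α1 * β1 * R2 / ((γ1 + μ) * N) - 1 ≤
          α1 * R1 * (S + R2) / S0 - 1 ∧ α1 * R1 * (S + R2) / S0 - 1 < 0)) := by
  intro S R2 hS hR2 hsum
  have hS0pos : 0 < S0 := by
    have h1v : 0 < 1 - v := by linarith
    rw [hS0]; positivity
  have hD : 0 < (γ1 + μ) * N := by positivity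
  have hR1pos : 0 < R1 := by rw [hR1def]; positivity
  have hq : 0 < R1 / S0 := div_pos hR1pos hS0pos
  have hkey : β1 * S / ((γ1 + μ) * N) + α1 * β1 * R2 / ((γ1 + μ) * N)
      = R1 / S0 * S + α1 * (R1 / S0) * R2 := by
    rw [hR1def]; field_simp
  have hα1R1' : α1 * R1 ≤ 1 := by
    rw [le_div_iff₀ hR1pos] at hα1R1; linarith
  constructor
  · intro hα11
    constructor
    · rw [hkey]
      have h1 : α1 * (R1 / S0) * R2 ≤ R1 / S0 * R2 :=
        mul_le_mul_of_nonneg_right (by nlinarith) hR2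
      have h2 : R1 * (S + R2) / S0 = R1 / S0 * S + R1 / S0 * R2 := by ring
      rw [h2]; linarith
    · have : R1 * (S + R2) < S0 := by nlinarith
      have := (div_lt_one hS0pos).mpr this
      linarith
  · intro hα11
    constructor
    · rw [hkey]
      have h1 : R1 / S0 * S ≤ α1 * (R1 / S0) * S :=
        mul_le_mul_of_nonneg_right (by nlinarith) hS
      have h2 : α1 * R1 * (S + R2) / S0 = α1 * (R1 / S0) * S + α1 * (R1 / S0) * R2 := by
        ring
      rw [h2]; linarith
    · have : α1 * R1 * (S + R2) < S0 := by nlinarith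
      have := (div_lt_one hS0pos).mpr this
      linarith
end
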